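/- Let α ∈ L and let w = u_0 a_1 u_1 ⋯ a_n u_n ∈ Γ* be its α-factorization. Then w is α-reduced if and only if a_i u_i a_{i+1} ≠ a_i a_{i+1} u_i in G for all 1 ≤ i < n. -/

import Mathlib

/-- The set of commutator relators defining a graph product. -/
def gpRels {L : Type} (I : L → L → Prop) (G : L → Type) [∀ α, Group (G α)] :
    Set (Monoid.CoprodI G) :=
  {x | ∃ (α β : L) (g : G α) (h : G β), I α β ∧
    x = Monoid.CoprodI.of g * Monoid.CoprodI.of h *
        (Monoid.CoprodI.of g)⁻¹ * (Monoid.CoprodI.of h)⁻¹}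

/-- The graph product of the groups `G α` over the independence relation `I`. -/
def GP {L : Type} (I : L → L → Prop) (G : L → Type) [∀ α, Group (G α)] : Type :=
  Monoid.CoprodI G ⧸ Subgroup.normalClosure (gpRels I G)

instance {L : Type} (I : L → L → Prop) (G : L → Type) [∀ α, Group (G α)] :
    Group (GP I G) := QuotientGroup.Quotient.group _

/-- The canonical homomorphism of a node group into the graph product. -/
def gpOf {L : Type} (I : L → L → Prop) (G : L → Type) [∀ α, Group (G α)] (α : L) :
    G α →* GP I G :=
  (QuotientGroup.mk' _).comp Monoid.CoprodI.of

/-- A letter: a nontrivial element of one of the node groups. -/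
abbrev Letter (L : Type) (G : L → Type) [∀ α, Group (G α)] : Type :=
  Σ α : L, {g : G α // g ≠ 1}

variable {L : Type} (I : L → L → Prop) (G : L → Type) [∀ α, Group (G α)]

/-- The element of the graph product represented by a word. -/
def evalWord (w : List (Letter L G)) : GP I G :=
  (w.map fun l => gpOf I G l.1 l.2.1).prod

/-- One elementary commutation step between trace-equivalent words. -/
inductive TraceStep : List (Letter L G) → List (Letter L G) → Prop
  | swap (u v : List (Letter L G)) (a b : Letter L G) (h : I a.1 b.1) :
      TraceStep (u ++ a :: b :: v) (u ++ b :: a :: v)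

/-- Trace equivalence: the congruence generated by commuting independent letters. -/
def TraceEquiv : List (Letter L G) → List (Letter L G) → Prop :=
  Relation.EqvGen (TraceStep I G)

/-- `IndepWord I G β u` means every letter of `u` is independent of `β`,
i.e. `u ∈ I(β)`. -/
def IndepWord (β : L) (u : List (Letter L G)) : Prop := ∀ c ∈ u, I c.1 β

/-- A word is reduced if it contains no factor `b u b'` with `b, b' ∈ Γ_β`
and `u ∈ I(β)`. -/
def Reduced (w : List (Letter L G)) : Prop :=
  ¬ ∃ (β : L) (b b' : {g : G β // g ≠ 1}) (x u y : List (Letter L G)),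
      w = x ++ (⟨β, b⟩ : Letter L G) :: (u ++ (⟨β, b'⟩ : Letter L G) :: y) ∧
      IndepWord I G β u

/-- `|w|_α` : number of letters of `w` in `Γ_α`. -/
noncomputable def countAlpha (α : L) (w : List (Letter L G)) : ℕ :=
  (w.filter fun l => Classical.propDecidable (l.1 = α) |>.decide).length

/-- The alphabet `al(w)` of a word. -/
def alph (w : List (Letter L G)) : Set L := {α | ∃ l ∈ w, l.1 = α}

/-- A reduced word is cyclically reduced if it has no factorization `≡ a v a'`
with `a, a'` letters from the same node group. -/
def IsCyclicallyReduced (w : List (Letter L G)) : Prop :=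
  Reduced I G w ∧
  ¬ ∃ (α : L) (a a' : {g : G α // g ≠ 1}) (v : List (Letter L G)),
      TraceEquiv I G w ((⟨α, a⟩ : Letter L G) :: (v ++ [(⟨α, a'⟩ : Letter L G)]))

/-- Words `u` and `v` are transposed if `u ≡ r s` and `v ≡ s r`. -/
def Transposed (u v : List (Letter L G)) : Prop :=
  ∃ r s : List (Letter L G), TraceEquiv I G u (r ++ s) ∧ TraceEquiv I G v (s ++ r)

/-- `u ≈ v` : the reflexive-transitive closure of transposition. -/
def TransClosure : List (Letter L G) → List (Letter L G) → Prop :=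
  Relation.ReflTransGen (Transposed I G)

/-- The formal inverse of a letter. -/
def letterInv (l : Letter L G) : Letter L G :=
  ⟨l.1, ⟨(l.2 : G l.1)⁻¹, inv_ne_one.mpr l.2.2⟩⟩

/-- The formal inverse `p̄` of a word `p`. -/
def wordInv (w : List (Letter L G)) : List (Letter L G) :=
  (w.map (letterInv G)).reverse

/-- The dependence graph on `L`: distinct nodes are adjacent iff not independent. -/
def depGraph : SimpleGraph L where
  Adj a b := a ≠ b ∧ ¬ I a b ∧ ¬ I b a
  symm := by
    constructor
    intro a b ⟨h1, h2, h3⟩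
    exact ⟨h1.symm, h3, h2⟩
  loopless := by constructor; intro a ⟨h1, _⟩; exact h1 rfl

/-- A word is connected if its alphabet induces a connected subgraph of the
dependence graph. -/
def ConnectedWord (w : List (Letter L G)) : Prop :=
  ((depGraph I).induce (alph G w)).Connected

/-- A word `w` is `α`-reduced if every word with fewer letters from `Γ_α`
represents a different element of the graph product. -/
def AlphaReduced (α : L) (w : List (Letter L G)) : Prop :=
  ∀ w' : List (Letter L G), countAlpha G α w' < countAlpha G α w →
    evalWord I G w' ≠ evalWord I G w


/-!
The graph product acts on trace classes of reduced words (`ReducedTrace`): `g ∈ G β` takes out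
the `β`-letter `b` that can be commuted to the front, if there is one, and puts `g b` in front
(nothing when `g b = 1`). This is a well-defined action of `GP I G` because the `β`-letter taken
out does not depend on the representative of the trace class. Each letter changes the number of
`α`-letters of a class by at most one, so the normal form of `evalWord w'`, i.e. the image of the
empty word, has at most `|w'|_α` letters in `Γ_α`.

Let `w = u₀ a₁ u₁ ⋯ aₙ uₙ`. Feeding `w` to the action from the right, letters outside `Γ_α`
never alter the letter `aᵢ₊₁` at the front of the current class, and those that move past it
commute with it. Hence if `uᵢ` does not commute with `aᵢ₊₁`, then `aᵢ₊₁` cannot be commuted to the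
front after `uᵢ` is applied, and `aᵢ` is prepended as a new letter: the normal form of `w` has `n`
letters in `Γ_α`. Conversely, if `uᵢ` commutes with `aᵢ₊₁`, then `aᵢ aᵢ₊₁` can be merged into at
most one letter.
-/

section

variable {I G}

open scoped Classical

@[simp]
theorem evalWord_nil : evalWord I G [] = 1 := rfl

@[simp]
theorem evalWord_cons (c : Letter L G) (w : List (Letter L G)) :
    evalWord I G (c :: w) = gpOf I G c.1 c.2.1 * evalWord I G w := by
  simp [evalWord]

@[simp]
theorem evalWord_append (v w : List (Letter L G)) :
    evalWord I G (v ++ w) = evalWord I G v * evalWord I G w := by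
  simp [evalWord]

theorem gpOf_commute {β γ : L} (h : I β γ) (g : G β) (k : G γ) :
    Commute (gpOf I G β g) (gpOf I G γ k) := by
  have hrel := (QuotientGroup.eq_one_iff _).2
    (Subgroup.subset_normalClosure (s := gpRels I G) ⟨β, γ, g, k, h, rfl⟩)
  rw [QuotientGroup.mk_mul, QuotientGroup.mk_mul, QuotientGroup.mk_mul, QuotientGroup.mk_inv,
    QuotientGroup.mk_inv, ← commutatorElement_def] at hrel
  exact commutatorElement_eq_one_iff_commute.1 hrel

theorem IndepWord.commute (hsym : ∀ α β, I α β → I β α) {β : L} {x : List (Letter L G)}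
    (hx : IndepWord I G β x) (g : G β) : Commute (gpOf I G β g) (evalWord I G x) := by
  induction x with
  | nil => exact Commute.one_right _
  | cons c x ih =>
    rw [evalWord_cons]
    exact (gpOf_commute (hsym _ _ (hx c (.head _))) _ _).mul_right
      (ih fun d hd => hx d (.tail _ hd))

theorem countAlpha_cons (α : L) (c : Letter L G) (w : List (Letter L G)) :
    countAlpha G α (c :: w) = countAlpha G α w + if c.1 = α then 1 else 0 := by
  by_cases h : c.1 = α <;> simp [countAlpha, h]

theorem countAlpha_append (α : L) (v w : List (Letter L G)) :
    countAlpha G α (v ++ w) = countAlpha G α v + countAlpha G α w := by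
  simp [countAlpha]

theorem countAlpha_eq_zero_iff {α : L} {w : List (Letter L G)} :
    countAlpha G α w = 0 ↔ ∀ c ∈ w, c.1 ≠ α := by
  simp [countAlpha, List.filter_eq_nil_iff]

theorem TraceEquiv.refl (w : List (Letter L G)) : TraceEquiv I G w w := Relation.EqvGen.refl w

theorem TraceEquiv.symm {v w : List (Letter L G)} (h : TraceEquiv I G v w) :
    TraceEquiv I G w v := Relation.EqvGen.symm _ _ h

theorem TraceEquiv.trans {u v w : List (Letter L G)} (h₁ : TraceEquiv I G u v)
    (h₂ : TraceEquiv I G v w) : TraceEquiv I G u w := Relation.EqvGen.trans _ _ _ h₁ h₂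

theorem TraceEquiv.swap {c d : Letter L G} (h : I c.1 d.1) (v : List (Letter L G)) :
    TraceEquiv I G (c :: d :: v) (d :: c :: v) :=
  .rel _ _ (.swap [] v c d h)

theorem TraceEquiv.append_left {v w : List (Letter L G)} (h : TraceEquiv I G v w)
    (x : List (Letter L G)) : TraceEquiv I G (x ++ v) (x ++ w) := by
  induction h with
  | rel _ _ hs =>
    obtain ⟨u, v, c, d, hcd⟩ := hs
    exact .rel _ _ (by simpa using TraceStep.swap (x ++ u) v c d hcd)
  | refl => exact TraceEquiv.refl _
  | symm _ _ _ ih => exact ih.symm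
  | trans _ _ _ _ _ ih₁ ih₂ => exact ih₁.trans ih₂

theorem TraceEquiv.cons {v w : List (Letter L G)} (h : TraceEquiv I G v w)
    (c : Letter L G) : TraceEquiv I G (c :: v) (c :: w) :=
  h.append_left [c]

theorem TraceEquiv.eq_of_traceStep {β : Sort*} {f : List (Letter L G) → β}
    (hf : ∀ v w, TraceStep I G v w → f v = f w) {v w : List (Letter L G)}
    (h : TraceEquiv I G v w) : f v = f w :=
  congrArg (Quot.lift f hf) (Quot.eqvGen_sound h)

theorem TraceEquiv.evalWord_eq {v w : List (Letter L G)} (h : TraceEquiv I G v w) :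
    evalWord I G v = evalWord I G w := by
  refine h.eq_of_traceStep fun _ _ hs => ?_
  obtain ⟨u, v, c, d, hcd⟩ := hs
  simp only [evalWord_append, evalWord_cons, ← mul_assoc, (gpOf_commute hcd _ _).eq]

theorem TraceEquiv.countAlpha_eq (α : L) {v w : List (Letter L G)} (h : TraceEquiv I G v w) :
    countAlpha G α v = countAlpha G α w := by
  refine h.eq_of_traceStep fun _ _ hs => ?_
  obtain ⟨u, v, c, d, -⟩ := hs
  simp only [countAlpha_append, countAlpha_cons]
  omega

variable (I) in
/-- `peel I β w = (b, x y)` if `w = x b y` with `b ∈ Γ_β` and every letter of `x` independent of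
`β`, and `peel I β w = (1, w)` if there is no such factorization. -/
noncomputable def peel (β : L) : List (Letter L G) → G β × List (Letter L G)
  | [] => (1, [])
  | c :: v =>
    if h : c.1 = β then (h ▸ c.2.1, v)
    else if I c.1 β then ((peel β v).1, c :: (peel β v).2)
    else (1, c :: v)

noncomputable def prepend (β : L) (k : G β) (w : List (Letter L G)) : List (Letter L G) :=
  if h : k = 1 then w else ⟨β, k, h⟩ :: w

@[simp]
theorem peel_nil (β : L) : peel I β ([] : List (Letter L G)) = (1, []) := rfl

@[simp]
theorem peel_cons_self {β : L} (b : {g : G β // g ≠ 1}) (v : List (Letter L G)) :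
    peel I β (⟨β, b⟩ :: v) = (b.1, v) := by
  simp [peel]

theorem peel_cons_of_indep (hirr : ∀ α, ¬ I α α) {β : L} {c : Letter L G} (hc : I c.1 β)
    (v : List (Letter L G)) :
    peel I β (c :: v) = ((peel I β v).1, c :: (peel I β v).2) := by
  have hne : c.1 ≠ β := fun h => hirr β (h ▸ hc)
  simp [peel, hne, hc]

theorem peel_cons_of_not_indep {β : L} {c : Letter L G} (hne : c.1 ≠ β) (hc : ¬ I c.1 β)
    (v : List (Letter L G)) : peel I β (c :: v) = (1, c :: v) := by
  simp [peel, hne, hc]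

theorem peel_append_of_indepWord (hirr : ∀ α, ¬ I α α) {β : L} {x : List (Letter L G)}
    (hx : IndepWord I G β x) (y : List (Letter L G)) :
    peel I β (x ++ y) = ((peel I β y).1, x ++ (peel I β y).2) := by
  induction x with
  | nil => rfl
  | cons c x ih =>
    rw [List.cons_append, peel_cons_of_indep hirr (hx c (.head _)),
      ih fun d hd => hx d (.tail _ hd)]
    rfl

theorem peel_append_of_not_indepWord (hirr : ∀ α, ¬ I α α) {β : L} {x : List (Letter L G)}
    (hx : ¬ IndepWord I G β x) (y : List (Letter L G)) :
    peel I β (x ++ y) = ((peel I β x).1, (peel I β x).2 ++ y) := by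
  induction x with
  | nil => exact absurd (fun _ h => absurd h List.not_mem_nil) hx
  | cons c x ih =>
    obtain ⟨γ, g⟩ := c
    by_cases hγ : γ = β
    · subst hγ
      simp
    by_cases hc : I γ β
    · have hx' : ¬ IndepWord I G β x := fun h =>
        hx fun d hd => (List.mem_cons.1 hd).elim (· ▸ hc) (h d)
      rw [List.cons_append, peel_cons_of_indep hirr hc, peel_cons_of_indep hirr hc, ih hx']
      rfl
    · rw [List.cons_append, peel_cons_of_not_indep hγ hc, peel_cons_of_not_indep hγ hc]
      rfl

theorem peel_append_cons_of_not_indepWord (hirr : ∀ α, ¬ I α α) {β : L}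
    {x : List (Letter L G)} {c : Letter L G} (hc : c.1 ≠ β) (h : ¬ IndepWord I G β (x ++ [c]))
    (y : List (Letter L G)) :
    peel I β (x ++ c :: y) = ((peel I β x).1, (peel I β x).2 ++ c :: y) := by
  by_cases hx : IndepWord I G β x
  · have hcβ : ¬ I c.1 β := fun hcβ => h fun d hd =>
      (List.mem_append.1 hd).elim (hx d) fun hd => List.mem_singleton.1 hd ▸ hcβ
    have hx₁ := peel_append_of_indepWord hirr hx []
    simp only [List.append_nil, peel_nil] at hx₁
    rw [peel_append_of_indepWord hirr hx, hx₁, peel_cons_of_not_indep hc hcβ]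
  · exact peel_append_of_not_indepWord hirr hx _

theorem fst_peel_eq_one_of_forall_ne {β : L} {w : List (Letter L G)} (hw : ∀ c ∈ w, c.1 ≠ β) :
    (peel I β w).1 = 1 := by
  induction w with
  | nil => rfl
  | cons c w ih =>
    have hne := hw c (.head _)
    by_cases hc : I c.1 β
    · simp [peel, hne, hc, ih fun d hd => hw d (.tail _ hd)]
    · simp [peel, hne, hc]

theorem peel_eq_of_fst_eq_one {β : L} {w : List (Letter L G)} (hw : (peel I β w).1 = 1) :
    peel I β w = (1, w) := by
  induction w with
  | nil => rfl
  | cons c w ih =>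
    obtain ⟨γ, g⟩ := c
    by_cases hγ : γ = β
    · subst hγ
      exact absurd (by simpa using hw) g.2
    by_cases hc : I γ β
    · simp only [peel, hγ, hc, dite_false, if_true] at hw ⊢
      rw [ih hw]
    · simp [peel, hγ, hc]

theorem fst_peel_ne_one_iff (hirr : ∀ α, ¬ I α α) {β : L} {w : List (Letter L G)} :
    (peel I β w).1 ≠ 1 ↔ ∃ (b : {g : G β // g ≠ 1}) (x y : List (Letter L G)),
      w = x ++ ⟨β, b⟩ :: y ∧ IndepWord I G β x := by
  constructor
  · induction w with
    | nil => simp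
    | cons c w ih =>
      obtain ⟨γ, g⟩ := c
      intro hw
      by_cases hγ : γ = β
      · subst hγ
        exact ⟨g, [], w, rfl, fun _ h => absurd h List.not_mem_nil⟩
      by_cases hc : I γ β
      · rw [peel_cons_of_indep hirr hc] at hw
        obtain ⟨b, x, y, rfl, hx⟩ := ih hw
        exact ⟨b, ⟨γ, g⟩ :: x, y, rfl, fun d hd => (List.mem_cons.1 hd).elim (· ▸ hc) (hx d)⟩
      · exact absurd (by rw [peel_cons_of_not_indep hγ hc]) hw
  · rintro ⟨b, x, y, rfl, hx⟩
    rw [peel_append_of_indepWord hirr hx, peel_cons_self]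
    exact b.2

theorem fst_peel_append_cons_eq_one (hirr : ∀ α, ¬ I α α) (hsym : ∀ α β, I α β → I β α)
    {α : L} {a : {g : G α // g ≠ 1}} {p : List (Letter L G)} (hp : ∀ c ∈ p, c.1 ≠ α)
    (h : ¬ Commute (gpOf I G α a) (evalWord I G p)) (z : List (Letter L G)) :
    (peel I α (p ++ ⟨α, a⟩ :: z)).1 = 1 := by
  by_cases hpα : IndepWord I G α p
  · exact absurd (hpα.commute hsym a) h
  · rw [peel_append_of_not_indepWord hirr hpα, fst_peel_eq_one_of_forall_ne hp]

@[simp]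
theorem prepend_one (β : L) (w : List (Letter L G)) : prepend β (1 : G β) w = w := by
  simp [prepend]

theorem prepend_of_ne_one {β : L} {k : G β} (hk : k ≠ 1) (w : List (Letter L G)) :
    prepend β k w = ⟨β, k, hk⟩ :: w := by
  simp [prepend, hk]

theorem prepend_fst_snd (c : Letter L G) (w : List (Letter L G)) :
    prepend c.1 c.2.1 w = c :: w := by
  simp [prepend, c.2.2]

theorem prepend_append (β : L) (k : G β) (v w : List (Letter L G)) :
    prepend β k (v ++ w) = prepend β k v ++ w := by
  by_cases hk : k = 1 <;> simp [prepend, hk]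

@[simp]
theorem evalWord_prepend (β : L) (k : G β) (w : List (Letter L G)) :
    evalWord I G (prepend β k w) = gpOf I G β k * evalWord I G w := by
  by_cases hk : k = 1 <;> simp [prepend, hk]

theorem countAlpha_prepend_of_ne {α β : L} (h : β ≠ α) (k : G β) (w : List (Letter L G)) :
    countAlpha G α (prepend β k w) = countAlpha G α w := by
  by_cases hk : k = 1 <;> simp [prepend, hk, countAlpha_cons, h]

theorem countAlpha_prepend_le (α β : L) (k : G β) (w : List (Letter L G)) :
    countAlpha G α (prepend β k w) ≤ countAlpha G α w + 1 := by
  by_cases hk : k = 1 <;> simp [prepend, hk, countAlpha_cons]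
  split_ifs <;> omega

theorem le_countAlpha_prepend (α β : L) (k : G β) (w : List (Letter L G)) :
    countAlpha G α w ≤ countAlpha G α (prepend β k w) := by
  by_cases hk : k = 1 <;> simp [prepend, hk, countAlpha_cons]

theorem TraceEquiv.prepend {v w : List (Letter L G)} (h : TraceEquiv I G v w) (β : L)
    (k : G β) : TraceEquiv I G (prepend β k v) (prepend β k w) := by
  by_cases hk : k = 1
  · simpa [_root_.prepend, hk] using h
  · simpa [_root_.prepend, hk] using h.cons _

theorem traceEquiv_prepend_prepend {β γ : L} (h : I γ β) (k : G γ) (m : G β)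
    (w : List (Letter L G)) :
    TraceEquiv I G (prepend γ k (prepend β m w)) (prepend β m (prepend γ k w)) := by
  by_cases hk : k = 1
  · simpa [hk] using TraceEquiv.refl _
  by_cases hm : m = 1
  · simpa [hm] using TraceEquiv.refl _
  simpa [prepend, hk, hm] using TraceEquiv.swap (c := ⟨γ, k, hk⟩) (d := ⟨β, m, hm⟩) h w

theorem traceEquiv_prepend_append (hsym : ∀ α β, I α β → I β α) {β : L} {x : List (Letter L G)}
    (hx : IndepWord I G β x) (k : G β) (y : List (Letter L G)) :
    TraceEquiv I G (prepend β k (x ++ y)) (x ++ prepend β k y) := by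
  induction x with
  | nil => exact TraceEquiv.refl _
  | cons c x ih =>
    have hc := hx c (.head _)
    have hswap := traceEquiv_prepend_prepend (hsym _ _ hc) k c.2.1 (x ++ y)
    rw [prepend_fst_snd, prepend_fst_snd] at hswap
    exact hswap.trans ((ih fun d hd => hx d (.tail _ hd)).cons c)

theorem traceEquiv_prepend_peel (hirr : ∀ α, ¬ I α α) (hsym : ∀ α β, I α β → I β α) (β : L)
    (w : List (Letter L G)) :
    TraceEquiv I G (prepend β (peel I β w).1 (peel I β w).2) w := by
  induction w with
  | nil =>
    rw [peel_nil, prepend_one]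
    exact TraceEquiv.refl _
  | cons c w ih =>
    by_cases hγ : c.1 = β
    · obtain ⟨γ, g⟩ := c
      subst hγ
      rw [peel_cons_self, prepend_of_ne_one g.2]
      exact TraceEquiv.refl _
    by_cases hc : I c.1 β
    · rw [peel_cons_of_indep hirr hc]
      exact (traceEquiv_prepend_append hsym (x := [c])
        (fun d hd => (List.mem_singleton.1 hd) ▸ hc) _ _).trans (ih.cons _)
    · rw [peel_cons_of_not_indep hγ hc, prepend_one]
      exact TraceEquiv.refl _

theorem peel_prepend_of_fst_eq_one {β : L} {w : List (Letter L G)} (hw : (peel I β w).1 = 1)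
    (k : G β) : peel I β (prepend β k w) = (k, w) := by
  by_cases hk : k = 1
  · rw [hk, prepend_one, peel_eq_of_fst_eq_one hw]
  · rw [prepend_of_ne_one hk, peel_cons_self]

theorem peel_prepend_of_indep (hirr : ∀ α, ¬ I α α) {β γ : L} (h : I γ β) (k : G γ)
    (w : List (Letter L G)) :
    peel I β (prepend γ k w) = ((peel I β w).1, prepend γ k (peel I β w).2) := by
  by_cases hk : k = 1
  · simp [hk]
  · rw [prepend_of_ne_one hk, prepend_of_ne_one hk, peel_cons_of_indep hirr h]

theorem fst_peel_prepend_of_ne (hirr : ∀ α, ¬ I α α) {β γ : L} (hne : γ ≠ β)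
    {w : List (Letter L G)} (hw : (peel I β w).1 = 1) (k : G γ) :
    (peel I β (prepend γ k w)).1 = 1 := by
  by_cases h : I γ β
  · rw [peel_prepend_of_indep hirr h, hw]
  by_cases hk : k = 1
  · rwa [hk, prepend_one]
  · rw [prepend_of_ne_one hk, peel_cons_of_not_indep hne h]

theorem peel_cons_cons_of_indep (hirr : ∀ α, ¬ I α α) (hsym : ∀ α β, I α β → I β α) (β : L)
    {c d : Letter L G} (hcd : I c.1 d.1) (v : List (Letter L G)) :
    (peel I β (c :: d :: v)).1 = (peel I β (d :: c :: v)).1 ∧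
      TraceEquiv I G (peel I β (c :: d :: v)).2 (peel I β (d :: c :: v)).2 := by
  obtain ⟨γ, g⟩ := c
  obtain ⟨δ, k⟩ := d
  by_cases hγ : γ = β
  · subst hγ
    rw [peel_cons_self, peel_cons_of_indep hirr (hsym _ _ hcd), peel_cons_self]
    exact ⟨rfl, TraceEquiv.refl _⟩
  by_cases hδ : δ = β
  · subst hδ
    rw [peel_cons_self, peel_cons_of_indep hirr hcd, peel_cons_self]
    exact ⟨rfl, TraceEquiv.refl _⟩
  by_cases hγI : I γ β <;> by_cases hδI : I δ β <;>
    simpa [peel, hγ, hδ, hγI, hδI] using TraceEquiv.swap hcd _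

theorem peel_of_traceEquiv (hirr : ∀ α, ¬ I α α) (hsym : ∀ α β, I α β → I β α) (β : L)
    {v w : List (Letter L G)} (h : TraceEquiv I G v w) :
    (peel I β v).1 = (peel I β w).1 ∧ TraceEquiv I G (peel I β v).2 (peel I β w).2 := by
  induction h with
  | rel _ _ hs =>
    obtain ⟨u, v, c, d, hcd⟩ := hs
    by_cases hu : IndepWord I G β u
    · rw [peel_append_of_indepWord hirr hu, peel_append_of_indepWord hirr hu]
      obtain ⟨h₁, h₂⟩ := peel_cons_cons_of_indep hirr hsym β hcd v
      exact ⟨h₁, h₂.append_left u⟩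
    · rw [peel_append_of_not_indepWord hirr hu, peel_append_of_not_indepWord hirr hu]
      exact ⟨rfl, (TraceEquiv.swap hcd v).append_left _⟩
  | refl => exact ⟨rfl, TraceEquiv.refl _⟩
  | symm _ _ _ ih => exact ⟨ih.1.symm, ih.2.symm⟩
  | trans _ _ _ _ _ ih₁ ih₂ => exact ⟨ih₁.1.trans ih₂.1, ih₁.2.trans ih₂.2⟩

theorem peel_of_traceEquiv_prepend (hirr : ∀ α, ¬ I α α) (hsym : ∀ α β, I α β → I β α)
    {β : L} {k : G β} {t w : List (Letter L G)} (h : TraceEquiv I G w (prepend β k t))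
    (ht : (peel I β t).1 = 1) :
    (peel I β w).1 = k ∧ TraceEquiv I G (peel I β w).2 t := by
  simpa [peel_prepend_of_fst_eq_one ht] using peel_of_traceEquiv hirr hsym β h

theorem reduced_nil : Reduced I G [] := by
  rintro ⟨β, b, b', x, u, y, h, -⟩
  simp at h

theorem reduced_cons_iff (hirr : ∀ α, ¬ I α α) {c : Letter L G} {v : List (Letter L G)} :
    Reduced I G (c :: v) ↔ Reduced I G v ∧ (peel I c.1 v).1 = 1 := by
  obtain ⟨γ, g⟩ := c
  constructor
  · intro h
    refine ⟨fun ⟨β, b, b', x, u, y, hv, hu⟩ => h ⟨β, b, b', ⟨γ, g⟩ :: x, u, y, by rw [hv]; rfl, hu⟩,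
      not_not.1 fun hne => ?_⟩
    obtain ⟨b, x, y, rfl, hx⟩ := (fst_peel_ne_one_iff hirr).1 hne
    exact h ⟨γ, g, b, [], x, y, rfl, hx⟩
  · rintro ⟨hv, hpeel⟩ ⟨β, b, b', x, u, y, heq, hu⟩
    cases x with
    | nil =>
      obtain ⟨hc, rfl⟩ := List.cons.inj heq
      obtain rfl : γ = β := congrArg Sigma.fst hc
      exact (fst_peel_ne_one_iff hirr).2 ⟨b', u, y, rfl, hu⟩ hpeel
    | cons e x =>
      exact hv ⟨β, b, b', x, u, y, (List.cons.inj heq).2, hu⟩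

theorem Reduced.prepend (hirr : ∀ α, ¬ I α α) {β : L} {w : List (Letter L G)}
    (hw : Reduced I G w) (hpeel : (peel I β w).1 = 1) (k : G β) :
    Reduced I G (prepend β k w) := by
  by_cases hk : k = 1
  · rwa [hk, prepend_one]
  · rw [prepend_of_ne_one hk]
    exact (reduced_cons_iff hirr).2 ⟨hw, hpeel⟩

theorem Reduced.fst_peel_peel (hirr : ∀ α, ¬ I α α) {w : List (Letter L G)}
    (hw : Reduced I G w) (β : L) : (peel I β (peel I β w).2).1 = 1 := by
  induction w with
  | nil => rfl
  | cons c v ih =>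
    obtain ⟨hv, hpeel⟩ := (reduced_cons_iff hirr).1 hw
    by_cases hγ : c.1 = β
    · obtain ⟨γ, g⟩ := c
      subst hγ
      rwa [peel_cons_self]
    by_cases hc : I c.1 β
    · rw [peel_cons_of_indep hirr hc, peel_cons_of_indep hirr hc]
      exact ih hv
    · rw [peel_cons_of_not_indep hγ hc, peel_cons_of_not_indep hγ hc]

theorem Reduced.peel (hirr : ∀ α, ¬ I α α) (hsym : ∀ α β, I α β → I β α)
    {w : List (Letter L G)} (hw : Reduced I G w) (β : L) : Reduced I G (peel I β w).2 := by
  induction w with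
  | nil => exact reduced_nil
  | cons c v ih =>
    obtain ⟨hv, hpeel⟩ := (reduced_cons_iff hirr).1 hw
    by_cases hγ : c.1 = β
    · obtain ⟨γ, g⟩ := c
      subst hγ
      rwa [peel_cons_self]
    by_cases hc : I c.1 β
    · rw [peel_cons_of_indep hirr hc]
      refine (reduced_cons_iff hirr).2 ⟨ih hv, ?_⟩
      have h := (peel_of_traceEquiv hirr hsym c.1 (traceEquiv_prepend_peel hirr hsym β v)).1
      rwa [peel_prepend_of_indep hirr (hsym _ _ hc), hpeel] at h
    · rwa [peel_cons_of_not_indep hγ hc]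

theorem reduced_iff_of_traceStep (hirr : ∀ α, ¬ I α α) (hsym : ∀ α β, I α β → I β α)
    {v w : List (Letter L G)} (h : TraceStep I G v w) : Reduced I G v ↔ Reduced I G w := by
  obtain ⟨u, v, c, d, hcd⟩ := h
  induction u with
  | nil =>
    simp only [List.nil_append, reduced_cons_iff hirr, peel_cons_of_indep hirr hcd,
      peel_cons_of_indep hirr (hsym _ _ hcd)]
    tauto
  | cons e u ih =>
    have hpeel := (peel_of_traceEquiv hirr hsym e.1
      (Relation.EqvGen.rel _ _ (TraceStep.swap u v c d hcd))).1
    simp only [List.cons_append, reduced_cons_iff hirr (c := e), ih, hpeel]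

theorem Reduced.of_traceEquiv (hirr : ∀ α, ¬ I α α) (hsym : ∀ α β, I α β → I β α)
    {v w : List (Letter L G)} (hv : Reduced I G v) (h : TraceEquiv I G v w) : Reduced I G w :=
  h.eq_of_traceStep (fun _ _ hs => propext (reduced_iff_of_traceStep hirr hsym hs)) ▸ hv

def chunkWord (α : L) (cs : List ({g : G α // g ≠ 1} × List (Letter L G))) :
    List (Letter L G) :=
  cs.flatMap fun c => ⟨α, c.1⟩ :: c.2

@[simp]
theorem chunkWord_nil (α : L) :
    chunkWord α ([] : List ({g : G α // g ≠ 1} × List (Letter L G))) = [] :=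
  rfl

@[simp]
theorem chunkWord_cons (α : L) (c : {g : G α // g ≠ 1} × List (Letter L G))
    (cs : List ({g : G α // g ≠ 1} × List (Letter L G))) :
    chunkWord α (c :: cs) = ⟨α, c.1⟩ :: (c.2 ++ chunkWord α cs) :=
  rfl

theorem chunkWord_append (α : L) (cs ds : List ({g : G α // g ≠ 1} × List (Letter L G))) :
    chunkWord α (cs ++ ds) = chunkWord α cs ++ chunkWord α ds :=
  List.flatMap_append

theorem countAlpha_chunkWord {α : L} {cs : List ({g : G α // g ≠ 1} × List (Letter L G))}
    (hcs : ∀ c ∈ cs, ∀ d ∈ c.2, d.1 ≠ α) : countAlpha G α (chunkWord α cs) = cs.length := by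
  induction cs with
  | nil => rfl
  | cons c cs ih =>
    rw [chunkWord_cons, countAlpha_cons, countAlpha_append,
      countAlpha_eq_zero_iff.2 (hcs c (.head _)), ih fun d hd => hcs d (.tail _ hd)]
    simp

variable (I G) in
def ReducedTrace : Type :=
  Quot fun v w : {w : List (Letter L G) // Reduced I G w} => TraceEquiv I G v.1 w.1

namespace ReducedTrace

def mk (w : List (Letter L G)) (hw : Reduced I G w) : ReducedTrace I G :=
  Quot.mk _ ⟨w, hw⟩

theorem mk_eq_mk {v w : List (Letter L G)} {hv : Reduced I G v} {hw : Reduced I G w}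
    (h : TraceEquiv I G v w) : mk v hv = mk w hw :=
  Quot.sound h

theorem exists_eq_mk (s : ReducedTrace I G) : ∃ w hw, s = mk w hw := by
  obtain ⟨⟨w, hw⟩, rfl⟩ := Quot.exists_rep s
  exact ⟨w, hw, rfl⟩

variable (hirr : ∀ α, ¬ I α α) (hsym : ∀ α β, I α β → I β α)

noncomputable def act (β : L) (g : G β) : ReducedTrace I G → ReducedTrace I G :=
  Quot.lift
    (fun w => mk (prepend β (g * (peel I β w.1).1) (peel I β w.1).2)
      ((w.2.peel hirr hsym β).prepend hirr (w.2.fst_peel_peel hirr β) _))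
    fun _ _ h => mk_eq_mk <| by
      obtain ⟨h₁, h₂⟩ := peel_of_traceEquiv hirr hsym β h
      rw [h₁]
      exact h₂.prepend β _

theorem act_mk {β : L} (g : G β) {w : List (Letter L G)} (hw : Reduced I G w) :
    act hirr hsym β g (mk w hw) = mk (prepend β (g * (peel I β w).1) (peel I β w).2)
      ((hw.peel hirr hsym β).prepend hirr (hw.fst_peel_peel hirr β) _) :=
  rfl

theorem act_mk_of_traceEquiv {β : L} (g : G β) {k : G β} {w t : List (Letter L G)}
    (hw : Reduced I G w) (ht : Reduced I G t) (hpeel : (peel I β t).1 = 1)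
    (h : TraceEquiv I G w (prepend β k t)) :
    act hirr hsym β g (mk w hw) = mk (prepend β (g * k) t) (ht.prepend hirr hpeel _) := by
  obtain ⟨h₁, h₂⟩ := peel_of_traceEquiv_prepend hirr hsym h hpeel
  exact mk_eq_mk (by rw [h₁]; exact h₂.prepend β _)

theorem act_one (β : L) (s : ReducedTrace I G) : act hirr hsym β 1 s = s := by
  obtain ⟨w, hw, rfl⟩ := exists_eq_mk s
  exact mk_eq_mk (by simpa using traceEquiv_prepend_peel hirr hsym β w)

theorem act_act {β : L} (g h : G β) (s : ReducedTrace I G) :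
    act hirr hsym β g (act hirr hsym β h s) = act hirr hsym β (g * h) s := by
  obtain ⟨w, hw, rfl⟩ := exists_eq_mk s
  rw [act_mk, act_mk_of_traceEquiv hirr hsym g _ (hw.peel hirr hsym β)
    (hw.fst_peel_peel hirr β) (TraceEquiv.refl _), act_mk, mul_assoc]

theorem act_act_of_indep {β γ : L} (hβγ : I β γ) (g : G β) (h : G γ) (s : ReducedTrace I G) :
    act hirr hsym β g (act hirr hsym γ h s) = act hirr hsym γ h (act hirr hsym β g s) := by
  obtain ⟨w, hw, rfl⟩ := exists_eq_mk s
  have hne : γ ≠ β := fun e => hirr β (e ▸ hβγ)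
  -- write `w ≡ k t` with `k ∈ G γ`, then `t ≡ k' t'` with `k' ∈ G β`
  set k := (peel I γ w).1
  set t := (peel I γ w).2
  have ht : Reduced I G t := hw.peel hirr hsym γ
  set k' := (peel I β t).1
  set t' := (peel I β t).2
  have ht' : Reduced I G t' := ht.peel hirr hsym β
  have ht'β : (peel I β t').1 = 1 := ht.fst_peel_peel hirr β
  have ht'γ : (peel I γ t').1 = 1 := by
    have h := (peel_of_traceEquiv hirr hsym γ (traceEquiv_prepend_peel hirr hsym β t)).1
    rwa [peel_prepend_of_indep hirr hβγ, hw.fst_peel_peel hirr γ] at h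
  have hswap (m : G γ) : TraceEquiv I G (prepend γ m t) (prepend β k' (prepend γ m t')) :=
    ((traceEquiv_prepend_peel hirr hsym β t).symm.prepend γ m).trans
      (traceEquiv_prepend_prepend (hsym _ _ hβγ) m k' t')
  have hγβ := fst_peel_prepend_of_ne hirr hne ht'β
  have hβγ' := fst_peel_prepend_of_ne hirr hne.symm ht'γ
  rw [act_mk, act_mk_of_traceEquiv hirr hsym g _ (ht'.prepend hirr ht'γ _) (hγβ _) (hswap _),
    act_mk_of_traceEquiv hirr hsym g hw (ht'.prepend hirr ht'γ _) (hγβ _)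
      ((traceEquiv_prepend_peel hirr hsym γ w).symm.trans (hswap _)),
    act_mk_of_traceEquiv hirr hsym h _ (ht'.prepend hirr ht'β _) (hβγ' _)
      (traceEquiv_prepend_prepend hβγ _ _ _)]
  exact mk_eq_mk (traceEquiv_prepend_prepend hβγ _ _ _)

noncomputable def actHom (β : L) : G β →* Equiv.Perm (ReducedTrace I G) where
  toFun g :=
    { toFun := act hirr hsym β g
      invFun := act hirr hsym β g⁻¹
      left_inv := fun s => by rw [act_act, inv_mul_cancel, act_one]
      right_inv := fun s => by rw [act_act, mul_inv_cancel, act_one] }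
  map_one' := Equiv.ext (act_one hirr hsym β)
  map_mul' g h := Equiv.ext fun s => (act_act hirr hsym g h s).symm

noncomputable def toPerm : GP I G →* Equiv.Perm (ReducedTrace I G) :=
  QuotientGroup.lift _ (Monoid.CoprodI.lift (actHom hirr hsym)) <|
    Subgroup.normalClosure_le_normal <| by
      rintro _ ⟨β, γ, g, h, hβγ, rfl⟩
      have hcomm : actHom hirr hsym β g * actHom hirr hsym γ h =
          actHom hirr hsym γ h * actHom hirr hsym β g :=
        Equiv.ext (act_act_of_indep hirr hsym hβγ g h)
      simp only [SetLike.mem_coe, MonoidHom.mem_ker, map_mul, map_inv, Monoid.CoprodI.lift_of,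
        hcomm, mul_inv_cancel_right, mul_inv_cancel]

theorem toPerm_gpOf {β : L} (g : G β) (s : ReducedTrace I G) :
    toPerm hirr hsym (gpOf I G β g) s = act hirr hsym β g s := by
  simp only [toPerm, gpOf]
  rfl

theorem toPerm_evalWord_cons (c : Letter L G) (w : List (Letter L G)) (s : ReducedTrace I G) :
    toPerm hirr hsym (evalWord I G (c :: w)) s =
      act hirr hsym c.1 c.2.1 (toPerm hirr hsym (evalWord I G w) s) := by
  rw [evalWord_cons, map_mul, Equiv.Perm.mul_apply, toPerm_gpOf]

theorem toPerm_evalWord_append (v w : List (Letter L G)) (s : ReducedTrace I G) :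
    toPerm hirr hsym (evalWord I G (v ++ w)) s =
      toPerm hirr hsym (evalWord I G v) (toPerm hirr hsym (evalWord I G w) s) := by
  rw [evalWord_append, map_mul, Equiv.Perm.mul_apply]

theorem act_mk_of_fst_peel_eq_one {β : L} (b : {g : G β // g ≠ 1}) {w : List (Letter L G)}
    (hw : Reduced I G w) (hpeel : (peel I β w).1 = 1) :
    act hirr hsym β b.1 (mk w hw) = mk (⟨β, b⟩ :: w) ((reduced_cons_iff hirr).2 ⟨hw, hpeel⟩) := by
  rw [act_mk]
  exact mk_eq_mk (by
    simpa [peel_eq_of_fst_eq_one hpeel, prepend_of_ne_one b.2] using TraceEquiv.refl _)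

noncomputable def count (α : L) : ReducedTrace I G → ℕ :=
  Quot.lift (fun w => countAlpha G α w.1) fun _ _ h => h.countAlpha_eq α

theorem count_mk (α : L) {w : List (Letter L G)} (hw : Reduced I G w) :
    count α (mk w hw) = countAlpha G α w :=
  rfl

theorem count_act_of_ne {α β : L} (h : β ≠ α) (g : G β) (s : ReducedTrace I G) :
    count α (act hirr hsym β g s) = count α s := by
  obtain ⟨w, hw, rfl⟩ := exists_eq_mk s
  rw [act_mk, count_mk, count_mk, countAlpha_prepend_of_ne h,
    ← countAlpha_prepend_of_ne h (peel I β w).1,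
    (traceEquiv_prepend_peel hirr hsym β w).countAlpha_eq]

theorem count_act_le (α : L) {β : L} (g : G β) (s : ReducedTrace I G) :
    count α (act hirr hsym β g s) ≤ count α s + 1 := by
  obtain ⟨w, hw, rfl⟩ := exists_eq_mk s
  rw [act_mk, count_mk, count_mk, ← (traceEquiv_prepend_peel hirr hsym β w).countAlpha_eq]
  exact (countAlpha_prepend_le α β _ _).trans
    (Nat.add_le_add_right (le_countAlpha_prepend α β _ _) 1)

theorem count_toPerm_evalWord_le (α : L) (w : List (Letter L G)) (s : ReducedTrace I G) :
    count α (toPerm hirr hsym (evalWord I G w) s) ≤ countAlpha G α w + count α s := by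
  induction w with
  | nil => simp [countAlpha]
  | cons c w ih =>
    rw [toPerm_evalWord_cons, countAlpha_cons]
    by_cases hc : c.1 = α
    · have := count_act_le hirr hsym α c.2.1 (toPerm hirr hsym (evalWord I G w) s)
      rw [if_pos hc]
      omega
    · rw [count_act_of_ne hirr hsym hc, if_neg hc]
      omega

theorem count_toPerm_evalWord_of_forall_ne {α : L} {w : List (Letter L G)}
    (hw : ∀ c ∈ w, c.1 ≠ α) (s : ReducedTrace I G) :
    count α (toPerm hirr hsym (evalWord I G w) s) = count α s := by
  induction w with
  | nil => simp
  | cons c w ih =>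
    rw [toPerm_evalWord_cons, count_act_of_ne hirr hsym (hw c (.head _)),
      ih fun d hd => hw d (.tail _ hd)]

theorem exists_act_mk_eq_mk {β : L} (g : G β) {v w : List (Letter L G)} (hw : Reduced I G w)
    (h : TraceEquiv I G (prepend β (g * (peel I β w).1) (peel I β w).2) v) :
    ∃ hv, act hirr hsym β g (mk w hw) = mk v hv :=
  ⟨((hw.peel hirr hsym β).prepend hirr (hw.fst_peel_peel hirr β) _).of_traceEquiv hirr hsym h,
    mk_eq_mk h⟩

-- Letters outside `Γ_α` never absorb `a`; those that move past it commute with it.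
theorem act_mk_append_cons {α γ : L} (hγ : γ ≠ α) (g : G γ) (a : {g : G α // g ≠ 1})
    {p z : List (Letter L G)} (hp : ∀ c ∈ p, c.1 ≠ α) (hw : Reduced I G (p ++ ⟨α, a⟩ :: z)) :
    ∃ p' z' hw', act hirr hsym γ g (mk _ hw) = mk (p' ++ ⟨α, a⟩ :: z') hw' ∧
      (∀ c ∈ p', c.1 ≠ α) ∧
      Commute (gpOf I G α a) ((evalWord I G p')⁻¹ * gpOf I G γ g * evalWord I G p) := by
  by_cases hpa : IndepWord I G γ (p ++ [⟨α, a⟩])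
  · have hpγ : IndepWord I G γ p := fun c hc => hpa c (List.mem_append_left _ hc)
    have haγ : I α γ := hpa ⟨α, a⟩ (by simp)
    have hpeel := peel_append_of_indepWord hirr hpa z
    simp only [List.append_assoc, List.singleton_append] at hpeel
    obtain ⟨hw', hs⟩ := exists_act_mk_eq_mk hirr hsym g hw
      (v := p ++ ⟨α, a⟩ :: prepend γ (g * (peel I γ z).1) (peel I γ z).2) (by
      rw [hpeel]
      simpa using traceEquiv_prepend_append hsym hpa (g * (peel I γ z).1) (peel I γ z).2)
    refine ⟨p, _, hw', hs, hp, ?_⟩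
    rw [mul_assoc, (hpγ.commute hsym g).eq, inv_mul_cancel_left]
    exact gpOf_commute haγ _ _
  · have hpeel := peel_append_cons_of_not_indepWord hirr (c := ⟨α, a⟩) hγ.symm hpa z
    obtain ⟨hw', hs⟩ := exists_act_mk_eq_mk hirr hsym g hw
      (v := prepend γ (g * (peel I γ p).1) (peel I γ p).2 ++ ⟨α, a⟩ :: z) (by
      rw [hpeel, prepend_append]
      exact TraceEquiv.refl _)
    have hp' := traceEquiv_prepend_peel hirr hsym γ p
    refine ⟨_, z, hw', hs, ?_, ?_⟩
    · rw [← countAlpha_eq_zero_iff, countAlpha_prepend_of_ne hγ,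
        ← countAlpha_prepend_of_ne hγ (peel I γ p).1, hp'.countAlpha_eq]
      exact countAlpha_eq_zero_iff.2 hp
    · have hev : evalWord I G (prepend γ (g * (peel I γ p).1) (peel I γ p).2) =
          gpOf I G γ g * evalWord I G p := by
        rw [evalWord_prepend, map_mul, mul_assoc, ← evalWord_prepend, hp'.evalWord_eq]
      rw [hev, mul_assoc, inv_mul_cancel]
      exact Commute.one_right _

theorem toPerm_evalWord_mk_append_cons {α : L} (a : {g : G α // g ≠ 1})
    {u : List (Letter L G)} (hu : ∀ c ∈ u, c.1 ≠ α) {p z : List (Letter L G)}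
    (hp : ∀ c ∈ p, c.1 ≠ α) (hw : Reduced I G (p ++ ⟨α, a⟩ :: z)) :
    ∃ p' z' hw', toPerm hirr hsym (evalWord I G u) (mk _ hw) = mk (p' ++ ⟨α, a⟩ :: z') hw' ∧
      (∀ c ∈ p', c.1 ≠ α) ∧
      Commute (gpOf I G α a) ((evalWord I G p')⁻¹ * evalWord I G u * evalWord I G p) := by
  induction u with
  | nil => exact ⟨p, z, hw, by simp, hp, by simp⟩
  | cons c u ih =>
    obtain ⟨p₁, z₁, hw₁, hs₁, hp₁, hc₁⟩ := ih fun d hd => hu d (.tail _ hd)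
    obtain ⟨p₂, z₂, hw₂, hs₂, hp₂, hc₂⟩ :=
      act_mk_append_cons hirr hsym (hu c (.head _)) c.2.1 a hp₁ hw₁
    refine ⟨p₂, z₂, hw₂, by rw [toPerm_evalWord_cons, hs₁, hs₂], hp₂, ?_⟩
    have hprod : (evalWord I G p₂)⁻¹ * evalWord I G (c :: u) * evalWord I G p =
        ((evalWord I G p₂)⁻¹ * gpOf I G c.1 c.2.1 * evalWord I G p₁) *
          ((evalWord I G p₁)⁻¹ * evalWord I G u * evalWord I G p) := by
      rw [evalWord_cons]
      group
    rw [hprod]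
    exact hc₂.mul_right hc₁

theorem exists_toPerm_evalWord_chunkWord {α : L} (a : {g : G α // g ≠ 1})
    (u : List (Letter L G)) (cs : List ({g : G α // g ≠ 1} × List (Letter L G)))
    (hu : ∀ c ∈ u, c.1 ≠ α) (hcs : ∀ c ∈ cs, ∀ d ∈ c.2, d.1 ≠ α)
    (hchain : ((a, u) :: cs).IsChain fun c d => ¬ Commute (evalWord I G c.2) (gpOf I G α d.1)) :
    ∃ r hr, toPerm hirr hsym (evalWord I G (chunkWord α ((a, u) :: cs))) (mk [] reduced_nil) =
      mk (⟨α, a⟩ :: r) hr ∧ countAlpha G α r = cs.length := by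
  induction cs generalizing a u with
  | nil =>
    obtain ⟨r, hr, hs⟩ := exists_eq_mk (toPerm hirr hsym (evalWord I G u) (mk [] reduced_nil))
    have hr₀ : countAlpha G α r = 0 := by
      rw [← count_mk α hr, ← hs, count_toPerm_evalWord_of_forall_ne hirr hsym hu, count_mk]
      rfl
    have hpeel := fst_peel_eq_one_of_forall_ne (I := I) (countAlpha_eq_zero_iff.1 hr₀)
    refine ⟨r, (reduced_cons_iff hirr).2 ⟨hr, hpeel⟩, ?_, hr₀⟩
    rw [chunkWord_cons, chunkWord_nil, List.append_nil, toPerm_evalWord_cons, hs,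
      act_mk_of_fst_peel_eq_one hirr hsym a hr hpeel]
  | cons d cs ih =>
    obtain ⟨a', u'⟩ := d
    obtain ⟨hdep, hchain'⟩ := List.isChain_cons_cons.1 hchain
    obtain ⟨r, hr, hs, hcount⟩ :=
      ih a' u' (hcs _ (.head _)) (fun c hc => hcs c (.tail _ hc)) hchain'
    obtain ⟨p, z, hw, hs', hp, hcomm⟩ :=
      toPerm_evalWord_mk_append_cons hirr hsym a' hu (p := [])
        (fun _ h => absurd h List.not_mem_nil) hr
    simp only [List.nil_append] at hs'
    have hpeel : (peel I α (p ++ ⟨α, a'⟩ :: z)).1 = 1 := by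
      refine fst_peel_append_cons_eq_one hirr hsym hp (fun hp' => hdep ?_) z
      have h := hp'.mul_right hcomm
      rw [evalWord_nil, mul_one, mul_inv_cancel_left] at h
      exact h.symm
    refine ⟨p ++ ⟨α, a'⟩ :: z, (reduced_cons_iff hirr).2 ⟨hw, hpeel⟩, ?_, ?_⟩
    · rw [chunkWord_cons, toPerm_evalWord_cons, toPerm_evalWord_append, hs, hs',
        act_mk_of_fst_peel_eq_one hirr hsym a hw hpeel]
    · rw [← count_mk α hw, ← hs', count_toPerm_evalWord_of_forall_ne hirr hsym hu, count_mk,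
        countAlpha_cons, hcount]
      simp

end ReducedTrace

open ReducedTrace in
theorem alphaReduced_append_chunkWord (hirr : ∀ α, ¬ I α α) (hsym : ∀ α β, I α β → I β α)
    {α : L} {u : List (Letter L G)} {cs : List ({g : G α // g ≠ 1} × List (Letter L G))}
    (hu : ∀ c ∈ u, c.1 ≠ α) (hcs : ∀ c ∈ cs, ∀ d ∈ c.2, d.1 ≠ α)
    (hchain : cs.IsChain fun c d => ¬ Commute (evalWord I G c.2) (gpOf I G α d.1)) :
    AlphaReduced I G α (u ++ chunkWord α cs) := by
  intro w' hlt heq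
  have hcount : count α (toPerm hirr hsym (evalWord I G (u ++ chunkWord α cs))
      (mk [] reduced_nil)) = cs.length := by
    rw [toPerm_evalWord_append, count_toPerm_evalWord_of_forall_ne hirr hsym hu]
    cases cs with
    | nil => rfl
    | cons c cs =>
      obtain ⟨r, hr, hs, hr'⟩ := exists_toPerm_evalWord_chunkWord hirr hsym c.1 c.2 cs
        (hcs c (.head _)) (fun d hd => hcs d (.tail _ hd)) hchain
      rw [hs, count_mk, countAlpha_cons, hr']
      simp
  have hle := count_toPerm_evalWord_le hirr hsym α w' (mk [] reduced_nil)
  rw [heq, hcount, count_mk, countAlpha_eq_zero_iff.2 fun _ h => absurd h List.not_mem_nil] at hle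
  rw [countAlpha_append, countAlpha_eq_zero_iff.2 hu, countAlpha_chunkWord hcs] at hlt
  omega

theorem not_commute_of_alphaReduced {α : L} {a a' : {g : G α // g ≠ 1}}
    {x u y : List (Letter L G)} (h : AlphaReduced I G α (x ++ ⟨α, a⟩ :: u ++ ⟨α, a'⟩ :: y)) :
    ¬ Commute (evalWord I G u) (gpOf I G α a') := by
  intro hcomm
  refine h (x ++ prepend α (a.1 * a'.1) (u ++ y)) ?_ ?_
  · have := countAlpha_prepend_le α α (a.1 * a'.1) (u ++ y)
    simp only [countAlpha_append, countAlpha_cons, ↓reduceIte] at this ⊢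
    omega
  · simp only [evalWord_append, evalWord_cons, evalWord_prepend, map_mul, mul_assoc,
      hcomm.symm.left_comm]

theorem isChain_of_alphaReduced {α : L} {u : List (Letter L G)}
    {cs : List ({g : G α // g ≠ 1} × List (Letter L G))}
    (h : AlphaReduced I G α (u ++ chunkWord α cs)) :
    cs.IsChain fun c d => ¬ Commute (evalWord I G c.2) (gpOf I G α d.1) := by
  rw [List.isChain_iff_forall_rel_of_append_cons_cons]
  rintro c d l₁ l₂ rfl
  refine not_commute_of_alphaReduced (a := c.1) (x := u ++ chunkWord α l₁)
    (y := d.2 ++ chunkWord α l₂) ?_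
  simpa [chunkWord_append] using h

theorem alphaReduced_append_chunkWord_iff (hirr : ∀ α, ¬ I α α) (hsym : ∀ α β, I α β → I β α)
    {α : L} {u : List (Letter L G)} {cs : List ({g : G α // g ≠ 1} × List (Letter L G))}
    (hu : ∀ c ∈ u, c.1 ≠ α) (hcs : ∀ c ∈ cs, ∀ d ∈ c.2, d.1 ≠ α) :
    AlphaReduced I G α (u ++ chunkWord α cs) ↔
      cs.IsChain fun c d => ¬ Commute (evalWord I G c.2) (gpOf I G α d.1) :=
  ⟨isChain_of_alphaReduced, alphaReduced_append_chunkWord hirr hsym hu hcs⟩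

theorem evalWord_cons_append_singleton_eq_iff (c d : Letter L G) (u : List (Letter L G)) :
    evalWord I G (c :: u ++ [d]) = evalWord I G (c :: d :: u) ↔
      Commute (evalWord I G u) (gpOf I G d.1 d.2.1) := by
  simp [Commute, SemiconjBy]

end

theorem alpha_reduced_iff_no_adjacent_merge_general
    {L : Type} (I : L → L → Prop) (G : L → Type) [∀ α, Group (G α)]
    (hirr : ∀ α, ¬ I α α) (hsym : ∀ α β, I α β → I β α)
    (α : L) (n : ℕ)
    (u : Fin (n + 1) → List (Letter L G)) (a : Fin n → {g : G α // g ≠ 1})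
    (hu : ∀ i, ∀ c ∈ u i, c.1 ≠ α)
    (w : List (Letter L G))
    (hw : w = u 0 ++
      (List.ofFn fun j : Fin n => (⟨α, a j⟩ : Letter L G) :: u j.succ).flatten) :
    AlphaReduced I G α w ↔
      ∀ (j : Fin n) (hj : (j : ℕ) + 1 < n),
        evalWord I G ((⟨α, a j⟩ : Letter L G) :: u j.succ ++
            [(⟨α, a ⟨(j : ℕ) + 1, hj⟩⟩ : Letter L G)]) ≠
        evalWord I G ((⟨α, a j⟩ : Letter L G) ::
            (⟨α, a ⟨(j : ℕ) + 1, hj⟩⟩ : Letter L G) :: u j.succ) := by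
  have hchunks : (List.ofFn fun j : Fin n => (⟨α, a j⟩ : Letter L G) :: u j.succ).flatten =
      chunkWord α (List.ofFn fun j => (a j, u j.succ)) := by
    simp [chunkWord, List.flatMap, List.map_ofFn, Function.comp_def]
  have hcs : ∀ c ∈ List.ofFn (fun j => (a j, u j.succ)), ∀ d ∈ c.2, d.1 ≠ α := by
    simp only [List.mem_ofFn]
    rintro _ ⟨j, rfl⟩
    exact hu j.succ
  rw [hw, hchunks, alphaReduced_append_chunkWord_iff hirr hsym (hu 0) hcs, List.isChain_ofFn]
  simp only [ne_eq, evalWord_cons_append_singleton_eq_iff]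
  exact ⟨fun h j hj => h j hj, fun h i hi => h ⟨i, by omega⟩ hi⟩

theorem alpha_reduced_iff_no_adjacent_merge
    {L : Type} [Finite L] (I : L → L → Prop) (G : L → Type) [∀ α, Group (G α)]
    (hirr : ∀ α, ¬ I α α) (hsym : ∀ α β, I α β → I β α)
    (α : L) (n : ℕ)
    (u : Fin (n + 1) → List (Letter L G)) (a : Fin n → {g : G α // g ≠ 1})
    (hu : ∀ i, ∀ c ∈ u i, c.1 ≠ α)
    (w : List (Letter L G))
    (hw : w = u 0 ++
      (List.ofFn fun j : Fin n => (⟨α, a j⟩ : Letter L G) :: u j.succ).flatten) :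
    AlphaReduced I G α w ↔
      ∀ (j : Fin n) (hj : (j : ℕ) + 1 < n),
        evalWord I G ((⟨α, a j⟩ : Letter L G) :: u j.succ ++
            [(⟨α, a ⟨(j : ℕ) + 1, hj⟩⟩ : Letter L G)]) ≠
        evalWord I G ((⟨α, a j⟩ : Letter L G) ::
            (⟨α, a ⟨(j : ℕ) + 1, hj⟩⟩ : Letter L G) :: u j.succ) :=
  alpha_reduced_iff_no_adjacent_merge_general I G hirr hsym α n u a hu w hw
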